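/- Let σ̄ = ⟨σ₁,…,σₙ⟩ be a consistent permutation sequence such that each σᵢ has finite order, and suppose σ̄ is a layered symmetry of the modal CNF formula φ (σ̄(φ) = φ). Let C be a class of pointed Kripke models such that C ∩ C_Tree is closed under σ̄ (for every tree model M ∈ C, σ̄(M) ∈ C). Then Mod_{C ∩ C_Tree}(φ) = σ̄(Mod_{C ∩ C_Tree}(φ)). -/

import Mathlib

namespace ModalSym

inductive Lit (Atom : Type) : Type
  | pos (a : Atom) : Lit Atom
  | neg (a : Atom) : Lit Atom
  deriving DecidableEq

namespace Lit
def flip {Atom : Type} : Lit Atom → Lit Atom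
  | pos a => neg a
  | neg a => pos a
def atom {Atom : Type} : Lit Atom → Atom
  | pos a => a
  | neg a => a
end Lit

/-- A permutation `σ` of literals is consistent when it commutes with negation. -/
def Consistent {Atom : Type} (σ : Lit Atom → Lit Atom) : Prop :=
  ∀ l, σ l.flip = (σ l).flip

/-- Modal CNF clauses of modal depth at most `n`: a clause is a finite set whose
elements are literals or modal literals `□ₘ C` / `¬□ₘ C` (`Bool` gives the polarity,
`true` for `□ₘ C`). -/
@[reducible] def ClauseT (Atom Mod : Type) : ℕ → Type
  | 0 => Finset (Lit Atom)
  | n+1 => Finset (Lit Atom ⊕ Bool × Mod × ClauseT Atom Mod n)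

instance instDecEqClauseT {Atom Mod : Type} [DecidableEq Atom] [DecidableEq Mod] :
    ∀ n, DecidableEq (ClauseT Atom Mod n)
  | 0 => inferInstanceAs (DecidableEq (Finset (Lit Atom)))
  | n+1 =>
    letI := instDecEqClauseT (Atom := Atom) (Mod := Mod) n
    inferInstanceAs (DecidableEq (Finset (Lit Atom ⊕ Bool × Mod × ClauseT Atom Mod n)))

/-- A modal CNF formula (of modal depth at most `n`): a finite set of clauses. -/
@[reducible] def FormT (Atom Mod : Type) (n : ℕ) : Type := Finset (ClauseT Atom Mod n)

/-- A pointed Kripke model. -/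
structure KModel (Atom Mod : Type) : Type 1 where
  W : Type
  pt : W
  V : W → Set Atom
  R : Mod → W → W → Prop

def satLit {Atom : Type} (S : Set Atom) : Lit Atom → Prop
  | .pos a => a ∈ S
  | .neg a => a ∉ S

def satClause {Atom Mod : Type} (M : KModel Atom Mod) :
    ∀ n, ClauseT Atom Mod n → M.W → Prop
  | 0, C, v => ∃ l ∈ C, satLit (M.V v) l
  | n+1, C, v => ∃ e ∈ C,
      match e with
      | Sum.inl l => satLit (M.V v) l
      | Sum.inr (b, m, C') =>
          cond b (∀ u, M.R m v u → satClause M n C' u)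
                 (¬ ∀ u, M.R m v u → satClause M n C' u)

/-- `M ⊨ φ`. -/
def satForm {Atom Mod : Type} (M : KModel Atom Mod) {n : ℕ} (φ : FormT Atom Mod n) : Prop :=
  ∀ C ∈ φ, satClause M n C M.pt

/-- `L_S`, the complete consistent set of literals generated by `S ⊆ Atom`. -/
def genLits {Atom : Type} (S : Set Atom) : Set (Lit Atom) := {l | satLit S l}

def permClause {Atom Mod : Type} [DecidableEq Atom] [DecidableEq Mod]
    (σ : Lit Atom → Lit Atom) : ∀ n, ClauseT Atom Mod n → ClauseT Atom Mod n
  | 0, C => C.image σ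
  | n+1, C => C.image fun e =>
      match e with
      | Sum.inl l => Sum.inl (σ l)
      | Sum.inr (b, m, C') => Sum.inr (b, m, permClause σ n C')

/-- The action `σ(φ)` of a permutation of literals on a modal CNF formula. -/
def permForm {Atom Mod : Type} [DecidableEq Atom] [DecidableEq Mod]
    (σ : Lit Atom → Lit Atom) {n : ℕ} (φ : FormT Atom Mod n) : FormT Atom Mod n :=
  φ.image (permClause σ n)

/-- The permuted model `σ(M)`, with `V'(v) = σ(L_{V(v)}) ∩ Atom`. -/
def permModel {Atom Mod : Type} (σ : Lit Atom → Lit Atom) (M : KModel Atom Mod) :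
    KModel Atom Mod where
  W := M.W
  pt := M.pt
  V := fun v => {a | Lit.pos a ∈ σ '' genLits (M.V v)}
  R := M.R

def IsBisim {Atom Mod : Type} (M M' : KModel Atom Mod) (Z : M.W → M'.W → Prop) : Prop :=
  Z M.pt M'.pt ∧
  (∀ v v', Z v v' → ∀ a, a ∈ M.V v ↔ a ∈ M'.V v') ∧
  (∀ v v' m u, Z v v' → M.R m v u → ∃ u', M'.R m v' u' ∧ Z u u') ∧
  (∀ v v' m u', Z v v' → M'.R m v' u' → ∃ u, M.R m v u ∧ Z u u')

def Bisimilar {Atom Mod : Type} (M M' : KModel Atom Mod) : Prop := ∃ Z, IsBisim M M' Z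

def IsSigmaSim {Atom Mod : Type} (σ : Lit Atom → Lit Atom) (M M' : KModel Atom Mod)
    (Z : M.W → M'.W → Prop) : Prop :=
  Z M.pt M'.pt ∧
  (∀ v v', Z v v' → ∀ l, l ∈ genLits (M.V v) ↔ σ l ∈ genLits (M'.V v')) ∧
  (∀ v v' m u, Z v v' → M.R m v u → ∃ u', M'.R m v' u' ∧ Z u u') ∧
  (∀ v v' m u', Z v v' → M'.R m v' u' → ∃ u, M.R m v u ∧ Z u u')

/-- `M ,→σ M'`. -/
def SigmaSim {Atom Mod : Type} (σ : Lit Atom → Lit Atom) (M M' : KModel Atom Mod) : Prop :=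
  ∃ Z, IsSigmaSim σ M M' Z

/-- `IsPathFrom M v p`: `p` is a valid path (list of (modality, state) steps) starting at `v`. -/
def IsPathFrom {Atom Mod : Type} (M : KModel Atom Mod) : M.W → List (Mod × M.W) → Prop
  | _, [] => True
  | v, s :: rest => M.R s.1 v s.2 ∧ IsPathFrom M s.2 rest

def pathLast {Atom Mod : Type} (M : KModel Atom Mod) : M.W → List (Mod × M.W) → M.W
  | v, [] => v
  | _, s :: rest => pathLast M s.2 rest

/-- A tree model: every state is the last state of exactly one rooted path. -/
def IsTree {Atom Mod : Type} (M : KModel Atom Mod) : Prop :=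
  ∀ v : M.W, ∃! p : List (Mod × M.W), IsPathFrom M M.pt p ∧ pathLast M M.pt p = v

/-- The depth of a state: the (minimal) length of a rooted path leading to it. -/
noncomputable def depth {Atom Mod : Type} (M : KModel Atom Mod) (v : M.W) : ℕ :=
  sInf {d | ∃ p, IsPathFrom M M.pt p ∧ pathLast M M.pt p = v ∧ p.length = d}

/-- The unravelling `T(M)`. -/
def unravel {Atom Mod : Type} (M : KModel Atom Mod) : KModel Atom Mod where
  W := {p : List (Mod × M.W) // IsPathFrom M M.pt p}
  pt := ⟨[], trivial⟩
  V := fun p => M.V (pathLast M M.pt p.1)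
  R := fun m p p' => ∃ v, p'.1 = p.1 ++ [(m, v)]

/-- `head(σ̄)`: the first permutation of the sequence, identity for the empty sequence. -/
def headP {Atom : Type} (σs : List (Lit Atom → Lit Atom)) : Lit Atom → Lit Atom :=
  σs.headD id

def lpermClause {Atom Mod : Type} [DecidableEq Atom] [DecidableEq Mod]
    (σs : List (Lit Atom → Lit Atom)) : ∀ n, ClauseT Atom Mod n → ClauseT Atom Mod n
  | 0, C => C.image (headP σs)
  | n+1, C => C.image fun e =>
      match e with
      | Sum.inl l => Sum.inl (headP σs l)
      | Sum.inr (b, m, C') => Sum.inr (b, m, lpermClause σs.tail n C')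

/-- The action `σ̄(φ)` of a permutation sequence on a modal CNF formula. -/
def lpermForm {Atom Mod : Type} [DecidableEq Atom] [DecidableEq Mod]
    (σs : List (Lit Atom → Lit Atom)) {n : ℕ} (φ : FormT Atom Mod n) : FormT Atom Mod n :=
  φ.image (lpermClause σs n)

/-- The layered permuted model `σ̄(M)` (meaningful on tree models):
at a state of depth `d` the permutation `head(σ̄_{d+1})` is used. -/
noncomputable def lpermModel {Atom Mod : Type} (σs : List (Lit Atom → Lit Atom))
    (M : KModel Atom Mod) : KModel Atom Mod where
  W := M.W
  pt := M.pt
  V := fun v => {a | Lit.pos a ∈ headP (σs.drop (depth M v)) '' genLits (M.V v)}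
  R := M.R

def IsLSim {Atom Mod : Type} (σs : List (Lit Atom → Lit Atom)) (M M' : KModel Atom Mod)
    (Z : ℕ → M.W → M'.W → Prop) : Prop :=
  Z 0 M.pt M'.pt ∧
  (∀ i v v', Z i v v' →
    ∀ l, l ∈ genLits (M.V v) ↔ headP (σs.drop i) l ∈ genLits (M'.V v')) ∧
  (∀ i v v' m u, Z i v v' → M.R m v u → ∃ u', M'.R m v' u' ∧ Z (i+1) u u') ∧
  (∀ i v v' m u', Z i v v' → M'.R m v' u' → ∃ u, M.R m v u ∧ Z (i+1) u u')

/-- `M ,→σ̄ M'`. -/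
def LSim {Atom Mod : Type} (σs : List (Lit Atom → Lit Atom)) (M M' : KModel Atom Mod) : Prop :=
  ∃ Z, IsLSim σs M M' Z

/-- `Mod_C(φ)`: the models in the class `𝒞` satisfying `φ`. -/
def ModC {Atom Mod : Type} (𝒞 : Set (KModel Atom Mod)) {n : ℕ} (φ : FormT Atom Mod n) :
    Set (KModel Atom Mod) := {M ∈ 𝒞 | satForm M φ}

/-- `φ ⊨_C ψ`. -/
def Entails {Atom Mod : Type} (𝒞 : Set (KModel Atom Mod)) {n₁ n₂ : ℕ}
    (φ : FormT Atom Mod n₁) (ψ : FormT Atom Mod n₂) : Prop :=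
  ModC 𝒞 φ ⊆ ModC 𝒞 ψ

end ModalSym

/-! A tree model has a well-defined depth function that grows by one along every edge, so
`σ̄` acts on it state-wise by the single permutation `head(σ̄_{d+1})` of its layer. By induction
on clauses, `M ⊨ φ ↔ σ̄(M) ⊨ σ̄(φ)`, so a layered symmetry `σ̄` maps `Mod_{C ∩ C_Tree}(φ)`
into itself. Iterating `σ̄` on a model iterates each layer's permutation, so `σ̄^K` is the
identity for a common order `K`, and every model `M` of the class is `σ̄(σ̄^{K-1}(M))`. -/

theorem Set.image_eq_of_mapsTo_of_iterate_eq {α : Type*} {f : α → α} {S : Set α}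
    (hf : Set.MapsTo f S S) {K : ℕ} (hK : 1 ≤ K) (hper : ∀ x ∈ S, f^[K] x = x) :
    f '' S = S := by
  refine (hf.image_subset).antisymm fun x hx => ⟨f^[K - 1] x, hf.iterate (K - 1) hx, ?_⟩
  rw [← Function.iterate_succ_apply' f, Nat.succ_eq_add_one, Nat.sub_add_cancel hK, hper x hx]

namespace ModalSym

variable {Atom Mod : Type}

theorem Consistent.iterate {σ : Lit Atom → Lit Atom} (hσ : Consistent σ) (j : ℕ) :
    Consistent σ^[j] :=
  -- `Consistent σ` unfolds to `Function.Commute σ Lit.flip`.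
  Function.Commute.iterate_left hσ j

theorem headP_drop_mem_or_eq_id (σs : List (Lit Atom → Lit Atom)) (d : ℕ) :
    headP (σs.drop d) ∈ σs ∨ headP (σs.drop d) = id := by
  cases h : σs.drop d with
  | nil => exact Or.inr rfl
  | cons σ _ => exact Or.inl (List.mem_of_mem_drop (h ▸ List.mem_cons_self))

theorem exists_iterate_eq_id_of_forall {α : Type*} {σs : List (α → α)}
    (hord : ∀ σ ∈ σs, ∃ k : ℕ, 1 ≤ k ∧ σ^[k] = id) :
    ∃ K : ℕ, 1 ≤ K ∧ ∀ σ ∈ σs, σ^[K] = id := by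
  induction σs with
  | nil => exact ⟨1, le_rfl, by simp⟩
  | cons σ σt ih =>
    obtain ⟨k, hk, hσk⟩ := hord σ List.mem_cons_self
    obtain ⟨K, hK, hσtK⟩ := ih fun τ hτ => hord τ (List.mem_cons_of_mem σ hτ)
    refine ⟨k * K, Nat.one_le_iff_ne_zero.2 (by positivity), ?_⟩
    rintro τ (_ | ⟨_, hτ⟩)
    · rw [Function.iterate_mul, hσk, Function.iterate_id]
    · rw [mul_comm, Function.iterate_mul, hσtK τ hτ, Function.iterate_id]

/-- `σ(L_S) ∩ Atom`. -/
def permSet (τ : Lit Atom → Lit Atom) (S : Set Atom) : Set Atom :=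
  {a | Lit.pos a ∈ τ '' genLits S}

theorem satLit_flip (S : Set Atom) (l : Lit Atom) : satLit S l.flip ↔ ¬ satLit S l := by
  cases l <;> simp [Lit.flip, satLit]

theorem satLit_permSet {τ : Lit Atom → Lit Atom} (hτ : Function.Injective τ) (hc : Consistent τ)
    (S : Set Atom) (l : Lit Atom) :
    satLit (permSet τ S) (τ l) ↔ satLit S l := by
  have hmem : ∀ l', τ l' ∈ τ '' genLits S ↔ satLit S l' := fun _ => hτ.mem_set_image
  cases h : τ l with
  | pos b =>
    change Lit.pos b ∈ τ '' genLits S ↔ _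
    rw [← h, hmem]
  | neg b =>
    have hpos : Lit.pos b = τ l.flip := by rw [hc l, h]; rfl
    change Lit.pos b ∉ τ '' genLits S ↔ _
    rw [hpos, hmem, satLit_flip, not_not]

theorem genLits_permSet {τ : Lit Atom → Lit Atom} (hτ : Function.Bijective τ)
    (hc : Consistent τ) (S : Set Atom) :
    genLits (permSet τ S) = τ '' genLits S := by
  ext l
  obtain ⟨l, rfl⟩ := hτ.2 l
  exact (satLit_permSet hτ.1 hc S l).trans (hτ.1.mem_set_image (s := genLits S)).symm

theorem permSet_permSet {τ : Lit Atom → Lit Atom} (hτ : Function.Bijective τ)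
    (hc : Consistent τ) (τ' : Lit Atom → Lit Atom) (S : Set Atom) :
    permSet τ' (permSet τ S) = permSet (τ' ∘ τ) S := by
  rw [permSet, genLits_permSet hτ hc, ← Set.image_comp]
  rfl

theorem permSet_id (S : Set Atom) : permSet id S = S := by
  ext a
  simp [permSet, genLits, satLit]

def relabel (M : KModel Atom Mod) (τ : M.W → Lit Atom → Lit Atom) : KModel Atom Mod where
  W := M.W
  pt := M.pt
  V := fun v => permSet (τ v) (M.V v)
  R := M.R

theorem lpermModel_eq_relabel (σs : List (Lit Atom → Lit Atom)) (M : KModel Atom Mod) :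
    lpermModel σs M = relabel M fun v => headP (σs.drop (depth M v)) :=
  rfl

section Relabel

variable (M : KModel Atom Mod) (τ : M.W → Lit Atom → Lit Atom)

theorem isPathFrom_relabel :
    ∀ (v : M.W) (p : List (Mod × M.W)), IsPathFrom (relabel M τ) v p ↔ IsPathFrom M v p
  | _, [] => Iff.rfl
  | _, s :: p => and_congr Iff.rfl (isPathFrom_relabel s.2 p)

theorem pathLast_relabel :
    ∀ (v : M.W) (p : List (Mod × M.W)), pathLast (relabel M τ) v p = pathLast M v p
  | _, [] => rfl
  | _, s :: p => pathLast_relabel s.2 p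

theorem isTree_relabel : IsTree (relabel M τ) ↔ IsTree M :=
  forall_congr' fun v => existsUnique_congr fun p =>
    and_congr (isPathFrom_relabel M τ M.pt p)
      (Iff.of_eq (congrArg (· = v) (pathLast_relabel M τ M.pt p)))

theorem depth_relabel (v : M.W) : depth (relabel M τ) v = depth M v :=
  congrArg sInf <| Set.ext fun _ => exists_congr fun p =>
    and_congr (isPathFrom_relabel M τ M.pt p)
      (and_congr_left fun _ => Iff.of_eq (congrArg (· = v) (pathLast_relabel M τ M.pt p)))

theorem relabel_relabel (hτ : ∀ v, Function.Bijective (τ v)) (hc : ∀ v, Consistent (τ v))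
    (τ' : M.W → Lit Atom → Lit Atom) :
    relabel (relabel M τ) τ' = relabel M fun v => τ' v ∘ τ v := by
  simp only [relabel, permSet_permSet (hτ _) (hc _)]

theorem relabel_id : relabel M (fun _ => id) = M := by
  simp only [relabel, permSet_id]

end Relabel

theorem depth_root (M : KModel Atom Mod) : depth M M.pt = 0 :=
  Nat.sInf_eq_zero.2 (Or.inl ⟨[], trivial, rfl, rfl⟩)

theorem pathLast_append (M : KModel Atom Mod) (m : Mod) (u : M.W) :
    ∀ (v : M.W) (p : List (Mod × M.W)), pathLast M v (p ++ [(m, u)]) = u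
  | _, [] => rfl
  | _, s :: p => pathLast_append M m u s.2 p

theorem IsPathFrom.append {M : KModel Atom Mod} {m : Mod} {u : M.W} :
    ∀ {v : M.W} {p : List (Mod × M.W)}, IsPathFrom M v p → M.R m (pathLast M v p) u →
      IsPathFrom M v (p ++ [(m, u)])
  | _, [], _, h => ⟨h, trivial⟩
  | _, _ :: _, hp, h => ⟨hp.1, hp.2.append h⟩

theorem IsTree.depth_eq {M : KModel Atom Mod} (hM : IsTree M) {p : List (Mod × M.W)}
    (hp : IsPathFrom M M.pt p) : depth M (pathLast M M.pt p) = p.length := by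
  obtain ⟨q, _, hq⟩ := hM (pathLast M M.pt p)
  have hpaths : {d | ∃ r, IsPathFrom M M.pt r ∧ pathLast M M.pt r = pathLast M M.pt p ∧
      r.length = d} = {p.length} := by
    ext d
    constructor
    · rintro ⟨r, hr, hrp, rfl⟩
      rw [hq r ⟨hr, hrp⟩, hq p ⟨hp, rfl⟩, Set.mem_singleton_iff]
    · rintro rfl
      exact ⟨p, hp, rfl, rfl⟩
  rw [depth, hpaths, csInf_singleton]

theorem IsTree.depth_succ {M : KModel Atom Mod} (hM : IsTree M) {m : Mod} {v u : M.W}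
    (h : M.R m v u) : depth M u = depth M v + 1 := by
  obtain ⟨p, ⟨hp, rfl⟩, _⟩ := hM v
  rw [← pathLast_append M m u M.pt p, hM.depth_eq hp, hM.depth_eq (hp.append h),
    List.length_append, List.length_singleton]

section LayeredPermutation

variable {σs : List (Lit Atom → Lit Atom)}

theorem bijective_headP_drop (hbij : ∀ σ ∈ σs, Function.Bijective σ) (d : ℕ) :
    Function.Bijective (headP (σs.drop d)) :=
  (headP_drop_mem_or_eq_id σs d).elim (hbij _) fun h => h ▸ Function.bijective_id

theorem consistent_headP_drop (hcons : ∀ σ ∈ σs, Consistent σ) (d : ℕ) :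
    Consistent (headP (σs.drop d)) :=
  (headP_drop_mem_or_eq_id σs d).elim (hcons _) fun h _ => h ▸ rfl

theorem satClause_lpermModel [DecidableEq Atom] [DecidableEq Mod]
    (hbij : ∀ σ ∈ σs, Function.Bijective σ) (hcons : ∀ σ ∈ σs, Consistent σ)
    {M : KModel Atom Mod} (hM : IsTree M) :
    ∀ (n : ℕ) (C : ClauseT Atom Mod n) (v : M.W),
      satClause (lpermModel σs M) n (lpermClause (σs.drop (depth M v)) n C) v ↔
        satClause M n C v
  | 0, C, v => by
    simp only [satClause, lpermClause, Finset.exists_mem_image]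
    exact exists_congr fun l => and_congr_right fun _ =>
      satLit_permSet (bijective_headP_drop hbij _).1 (consistent_headP_drop hcons _) _ l
  | n + 1, C, v => by
    have hbox : ∀ m C', (∀ u, M.R m v u → satClause (lpermModel σs M) n
          (lpermClause (σs.drop (depth M v)).tail n C') u) ↔
        ∀ u, M.R m v u → satClause M n C' u :=
      fun m C' => forall₂_congr fun u hu => by
        rw [List.tail_drop, ← hM.depth_succ hu]
        exact satClause_lpermModel hbij hcons hM n C' u
    simp only [satClause, lpermClause, Finset.exists_mem_image]
    refine exists_congr fun e => and_congr_right fun _ => ?_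
    rcases e with l | ⟨_ | _, m, C'⟩
    · exact satLit_permSet (bijective_headP_drop hbij _).1 (consistent_headP_drop hcons _) _ l
    · exact not_congr (hbox m C')
    · exact hbox m C'

theorem satForm_lpermModel [DecidableEq Atom] [DecidableEq Mod]
    (hbij : ∀ σ ∈ σs, Function.Bijective σ) (hcons : ∀ σ ∈ σs, Consistent σ)
    {M : KModel Atom Mod} (hM : IsTree M) {n : ℕ} (φ : FormT Atom Mod n) :
    satForm (lpermModel σs M) (lpermForm σs φ) ↔ satForm M φ := by
  have hroot := satClause_lpermModel hbij hcons hM n (v := M.pt)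
  rw [depth_root, List.drop_zero] at hroot
  simp only [satForm, lpermForm, Finset.forall_mem_image]
  exact forall₂_congr fun C _ => hroot C

theorem iterate_lpermModel (hbij : ∀ σ ∈ σs, Function.Bijective σ)
    (hcons : ∀ σ ∈ σs, Consistent σ) (M : KModel Atom Mod) (j : ℕ) :
    (lpermModel σs)^[j] M = relabel M fun v => (headP (σs.drop (depth M v)))^[j] := by
  induction j with
  | zero => exact (relabel_id M).symm
  | succ j ih =>
    rw [Function.iterate_succ_apply', ih, lpermModel_eq_relabel]
    refine (relabel_relabel M _ (fun v => (bijective_headP_drop hbij _).iterate j)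
      (fun v => (consistent_headP_drop hcons _).iterate j) _).trans ?_
    simp only [depth_relabel, Function.iterate_succ']

theorem iterate_lpermModel_eq_self (hbij : ∀ σ ∈ σs, Function.Bijective σ)
    (hcons : ∀ σ ∈ σs, Consistent σ) {K : ℕ} (hK : ∀ σ ∈ σs, σ^[K] = id) (M : KModel Atom Mod) :
    (lpermModel σs)^[K] M = M := by
  rw [iterate_lpermModel hbij hcons]
  refine (congrArg (relabel M) (funext fun v => ?_)).trans (relabel_id M)
  rcases headP_drop_mem_or_eq_id σs (depth M v) with h | h
  · exact hK _ h
  · rw [h, Function.iterate_id]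

end LayeredPermutation

theorem modC_tree_eq_lperm_modC_general {Atom Mod : Type}
    [DecidableEq Atom] [DecidableEq Mod]
    (σs : List (Lit Atom → Lit Atom))
    (hbij : ∀ σ ∈ σs, Function.Bijective σ) (hcons : ∀ σ ∈ σs, Consistent σ)
    (hord : ∀ σ ∈ σs, ∃ k : ℕ, 1 ≤ k ∧ σ^[k] = id)
    {n : ℕ} (φ : FormT Atom Mod n) (hsym : lpermForm σs φ = φ)
    (𝒞 : Set (KModel Atom Mod))
    (hclosed : ∀ M ∈ 𝒞, IsTree M → lpermModel σs M ∈ 𝒞) :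
    ModC (𝒞 ∩ {M | IsTree M}) φ = lpermModel σs '' ModC (𝒞 ∩ {M | IsTree M}) φ := by
  obtain ⟨K, hK, hσK⟩ := exists_iterate_eq_id_of_forall hord
  have hmaps : Set.MapsTo (lpermModel σs) (ModC (𝒞 ∩ {M | IsTree M}) φ)
      (ModC (𝒞 ∩ {M | IsTree M}) φ) := by
    rintro M ⟨⟨hC, hM⟩, hsat⟩
    refine ⟨⟨hclosed M hC hM, (isTree_relabel M _).2 hM⟩, ?_⟩
    rw [← hsym]
    exact (satForm_lpermModel hbij hcons hM φ).2 hsat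
  exact (Set.image_eq_of_mapsTo_of_iterate_eq hmaps hK fun M _ =>
    iterate_lpermModel_eq_self hbij hcons hσK M).symm

/-- for a finite-order consistent layered symmetry `σ̄` of `φ` and a class
`𝒞` with `𝒞 ∩ C_Tree` closed under `σ̄`,
`Mod_{𝒞 ∩ C_Tree}(φ) = σ̄(Mod_{𝒞 ∩ C_Tree}(φ))`. -/
theorem modC_tree_eq_lperm_modC {Atom Mod : Type} [Countable Atom] [Countable Mod]
    [DecidableEq Atom] [DecidableEq Mod]
    (σs : List (Lit Atom → Lit Atom))
    (hbij : ∀ σ ∈ σs, Function.Bijective σ) (hcons : ∀ σ ∈ σs, Consistent σ)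
    (hord : ∀ σ ∈ σs, ∃ k : ℕ, 1 ≤ k ∧ σ^[k] = id)
    {n : ℕ} (φ : FormT Atom Mod n) (hsym : lpermForm σs φ = φ)
    (𝒞 : Set (KModel Atom Mod))
    (hclosed : ∀ M ∈ 𝒞, IsTree M → lpermModel σs M ∈ 𝒞) :
    ModC (𝒞 ∩ {M | IsTree M}) φ = lpermModel σs '' ModC (𝒞 ∩ {M | IsTree M}) φ :=
  modC_tree_eq_lperm_modC_general σs hbij hcons hord φ hsym 𝒞 hclosed

end ModalSym
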